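/- Let ρ1 ∈ D_{n1} and ρ2 ∈ D_{n2} be density matrices. There exists ρ ∈ S(ρ1,ρ2) with rank(ρ) = 1 if and only if ρ1 and ρ2 are isospectral, i.e., they have the same nonzero eigenvalues counting multiplicities. -/

import Mathlib

/-!
A rank-one state is `vecMulVec v (star v)`. Reading `v` as an `n1 × n2` matrix `ψ`, its partial
traces are `ψ * ψᴴ` and `(ψᴴ * ψ)ᵀ`, and these have the same nonzero eigenvalues because
`X ^ n2 * χ(ψ * ψᴴ) = X ^ n1 * χ(ψᴴ * ψ)`.

Conversely, write `ρ1 = W * Wᴴ`, where the columns of `W` are the eigenvectors of `ρ1` with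
nonzero eigenvalue `λ`, scaled by `√λ`, so that `Wᴴ * W` is the diagonal of those `λ`. Matching
them with orthonormal eigenvectors `V` of `ρ2ᵀ` for the same eigenvalues, `ψ = W * Vᴴ` satisfies
`ψ * ψᴴ = ρ1` and `ψᴴ * ψ = ρ2ᵀ` (a Schmidt decomposition).
-/

open Matrix Finset
open scoped ComplexOrder

/-- Partial trace over the first subsystem: `tr_1(ρ) = Σ_j ρ_{jj} ∈ M_{n2}`. -/
noncomputable def trace1 {n1 n2 : ℕ} (ρ : Matrix (Fin n1 × Fin n2) (Fin n1 × Fin n2) ℂ) :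
    Matrix (Fin n2) (Fin n2) ℂ :=
  Matrix.of fun i j => ∑ k : Fin n1, ρ (k, i) (k, j)

/-- Partial trace over the second subsystem: `tr_2(ρ) = (tr ρ_{ij})_{ij} ∈ M_{n1}`. -/
noncomputable def trace2 {n1 n2 : ℕ} (ρ : Matrix (Fin n1 × Fin n2) (Fin n1 × Fin n2) ℂ) :
    Matrix (Fin n1) (Fin n1) ℂ :=
  Matrix.of fun i j => ∑ k : Fin n2, ρ (i, k) (j, k)

open Polynomial

theorem Fintype.exists_equiv_comp_eq_of_map_univ_val_eq {α β γ : Type*} [Fintype α] [Fintype β]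
    [DecidableEq γ] {f : α → γ} {g : β → γ} (h : univ.val.map f = univ.val.map g) :
    ∃ e : α ≃ β, ∀ a, g (e a) = f a := by
  have hfiber (c : γ) : Fintype.card {a // f a = c} = Fintype.card {b // g b = c} := by
    have := congrArg (Multiset.count c) h
    simp only [Multiset.count_map, eq_comm (a := c)] at this
    rw [Fintype.card_subtype, Fintype.card_subtype]
    exact this
  exact ⟨Equiv.ofFiberEquiv fun c => Fintype.equivOfCardEq (hfiber c), Equiv.ofFiberEquiv_map _⟩

namespace Matrix

variable {𝕜 : Type*} [RCLike 𝕜] {m n ι : Type*} [Fintype m] [DecidableEq m] [Fintype n]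
  [DecidableEq n] [DecidableEq ι]

noncomputable def IsHermitian.nonzeroEigenvalues {A : Matrix n n 𝕜} (hA : A.IsHermitian) :
    Multiset ℝ :=
  (univ.val.map hA.eigenvalues).filter (· ≠ 0)

lemma IsHermitian.nonzeroEigenvalues_eq_map_subtype {A : Matrix n n 𝕜} (hA : A.IsHermitian) :
    hA.nonzeroEigenvalues =
      univ.val.map fun i : {i // hA.eigenvalues i ≠ 0} => hA.eigenvalues i := by
  rw [nonzeroEigenvalues, Multiset.filter_map]
  exact (univ_val_map_subtype_restrict _ _).symm

lemma IsHermitian.map_ofReal_nonzeroEigenvalues {A : Matrix n n 𝕜} (hA : A.IsHermitian) (k : ℕ) :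
    hA.nonzeroEigenvalues.map (RCLike.ofReal : ℝ → 𝕜) =
      (X ^ k * A.charpoly).roots.filter (· ≠ 0) := by
  rw [roots_mul (mul_ne_zero (pow_ne_zero _ X_ne_zero) A.charpoly_monic.ne_zero), roots_X_pow,
    hA.roots_charpoly_eq_eigenvalues, Multiset.filter_add, nonzeroEigenvalues, Multiset.filter_map,
    Multiset.filter_map, Multiset.map_map]
  simp [Function.comp_def]

lemma IsHermitian.nonzeroEigenvalues_eq_of_charpoly {A : Matrix m m 𝕜} {B : Matrix n n 𝕜}
    (hA : A.IsHermitian) (hB : B.IsHermitian)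
    (h : X ^ Fintype.card n * A.charpoly = X ^ Fintype.card m * B.charpoly) :
    hA.nonzeroEigenvalues = hB.nonzeroEigenvalues :=
  Multiset.map_injective RCLike.ofReal_injective <| by
    rw [hA.map_ofReal_nonzeroEigenvalues, h, ← hB.map_ofReal_nonzeroEigenvalues]

lemma IsHermitian.nonzeroEigenvalues_transpose {A : Matrix n n 𝕜} (hA : A.IsHermitian)
    (hAt : Aᵀ.IsHermitian) : hAt.nonzeroEigenvalues = hA.nonzeroEigenvalues := by
  rw [nonzeroEigenvalues, (hAt.eigenvalues_eq_eigenvalues_iff hA).mpr (charpoly_transpose A),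
    nonzeroEigenvalues]

lemma nonzeroEigenvalues_mul_conjTranspose_eq (ψ : Matrix m n 𝕜) (hA : (ψ * ψᴴ).IsHermitian)
    (hB : (ψᴴ * ψ).IsHermitian) : hA.nonzeroEigenvalues = hB.nonzeroEigenvalues :=
  hA.nonzeroEigenvalues_eq_of_charpoly hB (charpoly_mul_comm' ψ ψᴴ)

lemma conjTranspose_submatrix_mul_submatrix {U : Matrix n n 𝕜} (hU : U ∈ unitaryGroup n 𝕜)
    {g : ι → n} (hg : Function.Injective g) : (U.submatrix id g)ᴴ * U.submatrix id g = 1 := by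
  rw [conjTranspose_submatrix, ← submatrix_mul _ _ g id g Function.bijective_id,
    ← star_eq_conjTranspose, mem_unitaryGroup_iff'.mp hU, submatrix_one g hg]

lemma IsHermitian.eq_submatrix_mul_diagonal_mul_conjTranspose [Fintype ι] {A : Matrix n n 𝕜}
    (hA : A.IsHermitian) {g : ι → n} (hg : Function.Injective g)
    (hsupp : ∀ i, hA.eigenvalues i ≠ 0 → i ∈ Set.range g) :
    A = (hA.eigenvectorUnitary : Matrix n n 𝕜).submatrix id g *
      diagonal (fun k => (hA.eigenvalues (g k) : 𝕜)) *
        ((hA.eigenvectorUnitary : Matrix n n 𝕜).submatrix id g)ᴴ := by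
  conv_lhs => rw [hA.spectral_theorem, Unitary.conjStarAlgAut_apply]
  ext i j
  rw [mul_apply, mul_apply]
  simp only [mul_diagonal, submatrix_apply, conjTranspose_apply, id, Function.comp_apply]
  refine (Fintype.sum_of_injective g hg _ _ (fun k hk => ?_) fun _ => rfl).symm
  rw [not_imp_comm.mp (hsupp k) hk, RCLike.ofReal_zero, mul_zero, zero_mul]

lemma PosSemidef.exists_eq_mul_conjTranspose_and_gram_eq_diagonal [Fintype ι] {A : Matrix n n 𝕜}
    (hA : A.PosSemidef) {g : ι → n} (hg : Function.Injective g)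
    (hsupp : ∀ i, hA.1.eigenvalues i ≠ 0 → i ∈ Set.range g) :
    ∃ W : Matrix n ι 𝕜, A = W * Wᴴ ∧ Wᴴ * W = diagonal (fun k => (hA.1.eigenvalues (g k) : 𝕜)) := by
  set V := (hA.1.eigenvectorUnitary : Matrix n n 𝕜).submatrix id g
  set R : Matrix ι ι 𝕜 := diagonal fun k => (√(hA.1.eigenvalues (g k)) : 𝕜)
  have hR : Rᴴ = R := by simp [R, diagonal_conjTranspose]
  have hRR : R * R = diagonal (fun k => (hA.1.eigenvalues (g k) : 𝕜)) := by
    simp only [R, diagonal_mul_diagonal, ← RCLike.ofReal_mul,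
      Real.mul_self_sqrt (hA.eigenvalues_nonneg _)]
  refine ⟨V * R, ?_, ?_⟩
  · rw [conjTranspose_mul, hR, ← Matrix.mul_assoc, Matrix.mul_assoc V R R, hRR]
    exact hA.1.eq_submatrix_mul_diagonal_mul_conjTranspose hg hsupp
  · rw [conjTranspose_mul, hR, Matrix.mul_assoc, ← Matrix.mul_assoc Vᴴ V R,
      conjTranspose_submatrix_mul_submatrix (SetLike.coe_mem _) hg, one_mul, hRR]

lemma PosSemidef.exists_mul_conjTranspose_eq_and_conjTranspose_mul_eq {A : Matrix m m 𝕜}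
    {B : Matrix n n 𝕜} (hA : A.PosSemidef) (hB : B.PosSemidef)
    (h : hA.1.nonzeroEigenvalues = hB.1.nonzeroEigenvalues) :
    ∃ ψ : Matrix m n 𝕜, ψ * ψᴴ = A ∧ ψᴴ * ψ = B := by
  rw [hA.1.nonzeroEigenvalues_eq_map_subtype, hB.1.nonzeroEigenvalues_eq_map_subtype] at h
  obtain ⟨e, he⟩ := Fintype.exists_equiv_comp_eq_of_map_univ_val_eq h
  obtain ⟨W, hAW, hWW⟩ := hA.exists_eq_mul_conjTranspose_and_gram_eq_diagonal
    Subtype.val_injective fun i hi => ⟨⟨i, hi⟩, rfl⟩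
  set V : Matrix n _ 𝕜 := (hB.1.eigenvectorUnitary : Matrix n n 𝕜).submatrix id (Subtype.val ∘ e)
  have hinj : Function.Injective (Subtype.val ∘ e) := Subtype.val_injective.comp e.injective
  have hVV : Vᴴ * V = 1 := conjTranspose_submatrix_mul_submatrix (SetLike.coe_mem _) hinj
  have hBV : B = V * (Wᴴ * W) * Vᴴ := by
    simp_rw [hWW, ← he]
    exact hB.1.eq_submatrix_mul_diagonal_mul_conjTranspose hinj fun j hj =>
      ⟨e.symm ⟨j, hj⟩, by simp⟩
  refine ⟨W * Vᴴ, ?_, ?_⟩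
  · rw [conjTranspose_mul, conjTranspose_conjTranspose, Matrix.mul_assoc, ← Matrix.mul_assoc Vᴴ,
      hVV, Matrix.one_mul]
    exact hAW.symm
  · rw [conjTranspose_mul, conjTranspose_conjTranspose, Matrix.mul_assoc, ← Matrix.mul_assoc Wᴴ,
      ← Matrix.mul_assoc, hBV]

lemma PosSemidef.exists_eq_vecMulVec_of_rank_eq_one {A : Matrix n n 𝕜} (hA : A.PosSemidef)
    (h : A.rank = 1) : ∃ v : n → 𝕜, A = vecMulVec v (star v) := by
  obtain ⟨W, hAW, -⟩ := hA.exists_eq_mul_conjTranspose_and_gram_eq_diagonal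
    Subtype.val_injective fun i hi => ⟨⟨i, hi⟩, rfl⟩
  rw [hA.1.rank_eq_card_non_zero_eigs, Fintype.card_eq_one_iff_nonempty_unique] at h
  obtain ⟨_⟩ := h
  set v : n → 𝕜 := fun i => W i default
  refine ⟨v, hAW.trans ?_⟩
  ext i j
  rw [mul_apply, Fintype.sum_unique]
  rfl

lemma IsHermitian.rank_pos {A : Matrix n n 𝕜} (hA : A.IsHermitian) (h : A ≠ 0) : 0 < A.rank := by
  rw [hA.rank_eq_card_non_zero_eigs, Fintype.card_pos_iff]
  obtain ⟨i, hi⟩ := Function.ne_iff.mp (mt hA.eigenvalues_eq_zero_iff.mp h)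
  exact ⟨⟨i, hi⟩⟩

end Matrix

section PartialTrace

open Function

variable {n1 n2 : ℕ}

lemma trace_trace2 (ρ : Matrix (Fin n1 × Fin n2) (Fin n1 × Fin n2) ℂ) :
    (trace2 ρ).trace = ρ.trace := by
  simp only [Matrix.trace, trace2, Matrix.diag, of_apply, Fintype.sum_prod_type]

lemma trace2_vecMulVec_uncurry (ψ : Matrix (Fin n1) (Fin n2) ℂ) :
    trace2 (vecMulVec (uncurry ψ) (star (uncurry ψ))) = ψ * ψᴴ := by
  ext i j
  rfl

lemma trace1_vecMulVec_uncurry (ψ : Matrix (Fin n1) (Fin n2) ℂ) :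
    trace1 (vecMulVec (uncurry ψ) (star (uncurry ψ))) = (ψᴴ * ψ)ᵀ := by
  ext i j
  simp only [trace1, of_apply, transpose_apply, mul_apply, vecMulVec_apply, mul_comm]
  rfl

end PartialTrace

theorem stmt18_general {n1 n2 : ℕ}
    (ρ1 : Matrix (Fin n1) (Fin n1) ℂ) (ρ2 : Matrix (Fin n2) (Fin n2) ℂ)
    (hρ1 : ρ1.PosSemidef) (hρ1tr : ρ1.trace = 1)
    (hρ2 : ρ2.PosSemidef) :
    (∃ ρ : Matrix (Fin n1 × Fin n2) (Fin n1 × Fin n2) ℂ,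
        ρ.PosSemidef ∧ ρ.trace = 1 ∧ trace2 ρ = ρ1 ∧ trace1 ρ = ρ2 ∧ ρ.rank = 1) ↔
      Multiset.filter (fun x => x ≠ 0) (Finset.univ.val.map hρ1.1.eigenvalues) =
        Multiset.filter (fun x => x ≠ 0) (Finset.univ.val.map hρ2.1.eigenvalues) := by
  change _ ↔ hρ1.1.nonzeroEigenvalues = hρ2.1.nonzeroEigenvalues
  constructor
  · rintro ⟨ρ, hρ, -, h2, h1, hrank⟩
    obtain ⟨v, rfl⟩ := hρ.exists_eq_vecMulVec_of_rank_eq_one hrank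
    obtain ⟨ψ, rfl⟩ : ∃ ψ : Matrix (Fin n1) (Fin n2) ℂ, Function.uncurry ψ = v :=
      ⟨of fun i j => v (i, j), rfl⟩
    rw [trace2_vecMulVec_uncurry] at h2
    rw [trace1_vecMulVec_uncurry] at h1
    subst h2 h1
    have hψ := isHermitian_conjTranspose_mul_self ψ
    exact (nonzeroEigenvalues_mul_conjTranspose_eq ψ hρ1.1 hψ).trans
      (hψ.nonzeroEigenvalues_transpose hρ2.1).symm
  · intro h
    obtain ⟨ψ, hψ1, hψ2⟩ := hρ1.exists_mul_conjTranspose_eq_and_conjTranspose_mul_eq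
      hρ2.transpose (h.trans (hρ2.1.nonzeroEigenvalues_transpose hρ2.transpose.1).symm)
    set ρ := vecMulVec (Function.uncurry ψ) (star (Function.uncurry ψ))
    have hρ : ρ.PosSemidef := posSemidef_vecMulVec_self_star _
    have h2 : trace2 ρ = ρ1 := (trace2_vecMulVec_uncurry ψ).trans hψ1
    have h1 : trace1 ρ = ρ2 := by rw [trace1_vecMulVec_uncurry, hψ2, transpose_transpose]
    have htr : ρ.trace = 1 := by rw [← trace_trace2, h2, hρ1tr]
    have hρ0 : ρ ≠ 0 := by rintro h0; simp [h0] at htr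
    exact ⟨ρ, hρ, htr, h2, h1, (rank_vecMulVec_le _ _).antisymm (hρ.1.rank_pos hρ0)⟩

/-- There is a pure (rank-one) state in `S(ρ1, ρ2)` if and only if `ρ1` and `ρ2` are
isospectral, i.e. have the same nonzero eigenvalues counting multiplicities. -/
theorem stmt18 {n1 n2 : ℕ}
    (ρ1 : Matrix (Fin n1) (Fin n1) ℂ) (ρ2 : Matrix (Fin n2) (Fin n2) ℂ)
    (hρ1 : ρ1.PosSemidef) (hρ1tr : ρ1.trace = 1)
    (hρ2 : ρ2.PosSemidef) (hρ2tr : ρ2.trace = 1) :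
    (∃ ρ : Matrix (Fin n1 × Fin n2) (Fin n1 × Fin n2) ℂ,
        ρ.PosSemidef ∧ ρ.trace = 1 ∧ trace2 ρ = ρ1 ∧ trace1 ρ = ρ2 ∧ ρ.rank = 1) ↔
      Multiset.filter (fun x => x ≠ 0) (Finset.univ.val.map hρ1.1.eigenvalues) =
        Multiset.filter (fun x => x ≠ 0) (Finset.univ.val.map hρ2.1.eigenvalues) :=
  stmt18_general ρ1 ρ2 hρ1 hρ1tr hρ2
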